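/- arXiv:0710.3792 — 5 statements merged into one kernel-verified Lean document; each statement's English description precedes it below -/
import Mathlib

section
/- Let (X,μ) be a connected weighted graph with bounded row sums, and let {X_n} be a sequence of finite subsets of X with X_n ⊆ X_{n+1} and ⋃_{n} X_n = X, such that each restricted weighted graph (X_n, ₙμ) (ₙμ being the restriction of μ to X_n × X_n) is connected. Then the convergence parameters ₙR := 1/limsup_{k→∞}(ₙμ^{(k)}(x,y))^{1/k} decrease to R_μ as n → ∞, that is, lim_{n→∞} ₙR = inf_n ₙR = R_μ. -/
open Filter MeasureTheory ProbabilityTheory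
open scoped ENNReal NNReal

/-- `n`-step weights (matrix powers) of a weight kernel `μ` on a countable set. -/
noncomputable def matPow {X : Type*} [DecidableEq X] (μ : X → X → ℝ≥0∞) :
    ℕ → X → X → ℝ≥0∞
  | 0, x, y => if x = y then 1 else 0
  | n + 1, x, y => ∑' z, matPow μ n x z * μ z y

/-- `(X, μ)` has bounded row sums. -/
def bddRows {X : Type*} (μ : X → X → ℝ≥0∞) : Prop :=
  ∃ K : ℝ≥0∞, K ≠ ⊤ ∧ ∀ x, ∑' y, μ x y ≤ K

/-- `(X, μ)` is connected. -/
def connectedW {X : Type*} [DecidableEq X] (μ : X → X → ℝ≥0∞) : Prop :=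
  ∀ x y, ∃ n, 0 < n ∧ 0 < matPow μ n x y

/-- `limsup_n (μ^{(n)}(x,y))^{1/n}`, the reciprocal of the convergence parameter. -/
noncomputable def lsRoot {X : Type*} [DecidableEq X] (μ : X → X → ℝ≥0∞) (x y : X) : ℝ≥0∞ :=
  Filter.limsup (fun n : ℕ => matPow μ n x y ^ (n : ℝ)⁻¹) Filter.atTop

/-- The convergence parameter `R = 1 / limsup_n (μ^{(n)}(x,y))^{1/n}`. -/
noncomputable def convR {X : Type*} [DecidableEq X] (μ : X → X → ℝ≥0∞) (x y : X) : ℝ≥0∞ :=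
  (lsRoot μ x y)⁻¹

open Classical in
/-- Restriction of a weight kernel to a subset (extended by `0`). -/
noncomputable def restrictW {X : Type*} (μ : X → X → ℝ≥0∞) (A : Set X) : X → X → ℝ≥0∞ :=
  fun x y => if x ∈ A ∧ y ∈ A then μ x y else 0

/-!
The truncated kernels `ₙμ` increase to `μ`, so by monotone convergence
`μ^{(k)}(x,x) = sup_n ₙμ^{(k)}(x,x)`. For a kernel with bounded row sums in which `x` and `y`
communicate, supermultiplicativity `μ^{(k)}(x,x)^m μ^{(l)}(x,y) ≤ μ^{(mk+l)}(x,y)` and the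
reverse bound `μ^{(j)}(x,y) μ^{(l)}(y,x) ≤ μ^{(j+l)}(x,x)` identify `1/R(x,y)` with
`sup_{k ≥ 1} μ^{(k)}(x,x)^{1/k}`. Two suprema commute, so `1/ₙR` increases to `1/R_μ`.
-/

namespace ENNReal

lemma tendsto_const_rpow {α : Type*} {l : Filter α} {a : ℝ≥0∞} (ha0 : a ≠ 0) (haT : a ≠ ⊤)
    {f : α → ℝ} {t : ℝ} (hf : Tendsto f l (nhds t)) :
    Tendsto (fun i => a ^ f i) l (nhds (a ^ t)) := by
  have ha : 0 < a.toReal := ENNReal.toReal_pos ha0 haT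
  have h_ofReal : ∀ s : ℝ, a ^ s = ENNReal.ofReal (a.toReal ^ s) := fun s => by
    rw [← ENNReal.ofReal_rpow_of_pos ha, ENNReal.ofReal_toReal haT]
  simp only [h_ofReal]
  exact (ENNReal.continuous_ofReal.tendsto _).comp
    ((Real.continuousAt_const_rpow ha.ne').tendsto.comp hf)

lemma tendsto_rpow_inv_natCast {a : ℝ≥0∞} (ha0 : a ≠ 0) (haT : a ≠ ⊤) :
    Tendsto (fun j : ℕ => a ^ (j : ℝ)⁻¹) atTop (nhds 1) := by
  simpa using tendsto_const_rpow ha0 haT tendsto_inv_atTop_nhds_zero_nat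

lemma iSup_rpow {ι : Sort*} (f : ι → ℝ≥0∞) {t : ℝ} (ht : 0 < t) :
    (⨆ i, f i) ^ t = ⨆ i, f i ^ t :=
  (monotone_rpow_of_nonneg ht.le).map_iSup_of_continuousAt
    continuous_rpow_const.continuousAt (zero_rpow_of_pos ht)

lemma iSup_mul_iSup_of_monotone {ι : Type*} [Preorder ι] [IsDirectedOrder ι]
    {f g : ι → ℝ≥0∞} (hf : Monotone f) (hg : Monotone g) :
    (⨆ i, f i) * (⨆ i, g i) = ⨆ i, f i * g i := by
  refine le_antisymm ?_ (iSup_le fun i => mul_le_mul' (le_iSup f i) (le_iSup g i))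
  simp_rw [ENNReal.iSup_mul, ENNReal.mul_iSup]
  refine iSup₂_le fun i j => ?_
  obtain ⟨k, hik, hjk⟩ := exists_ge_ge i j
  exact le_iSup_of_le k (mul_le_mul' (hf hik) (hg hjk))

lemma tsum_iSup_of_monotone {α ι : Type*} [Preorder ι] [IsDirectedOrder ι]
    {f : ι → α → ℝ≥0∞} (hf : Monotone f) :
    ∑' a, ⨆ i, f i a = ⨆ i, ∑' a, f i a := by
  simp_rw [ENNReal.tsum_eq_iSup_sum]
  rw [iSup_comm]
  congr 1 with s
  exact finsetSum_iSup_of_monotone fun a _ _ hij => hf hij a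

end ENNReal

section matPow

variable {X : Type*} [DecidableEq X]

@[simp] lemma matPow_zero (μ : X → X → ℝ≥0∞) (x y : X) :
    matPow μ 0 x y = if x = y then 1 else 0 := rfl

lemma matPow_succ (μ : X → X → ℝ≥0∞) (k : ℕ) (x y : X) :
    matPow μ (k + 1) x y = ∑' z, matPow μ k x z * μ z y := rfl

lemma matPow_add (μ : X → X → ℝ≥0∞) (k l : ℕ) (x y : X) :
    matPow μ (k + l) x y = ∑' z, matPow μ k x z * matPow μ l z y := by
  induction l generalizing y with
  | zero => simp [tsum_ite_eq]
  | succ l ih =>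
    simp only [← add_assoc, matPow_succ, ih]
    calc ∑' w, (∑' z, matPow μ k x z * matPow μ l z w) * μ w y
        = ∑' w, ∑' z, matPow μ k x z * matPow μ l z w * μ w y := by
          simp only [← ENNReal.tsum_mul_right]
      _ = ∑' z, ∑' w, matPow μ k x z * matPow μ l z w * μ w y := ENNReal.tsum_comm
      _ = ∑' z, matPow μ k x z * ∑' w, matPow μ l z w * μ w y := by
          simp only [mul_assoc, ENNReal.tsum_mul_left]

lemma matPow_mul_matPow_le (μ : X → X → ℝ≥0∞) (k l : ℕ) (x z y : X) :
    matPow μ k x z * matPow μ l z y ≤ matPow μ (k + l) x y := by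
  rw [matPow_add]
  exact ENNReal.le_tsum z

lemma pow_matPow_le_matPow_mul (μ : X → X → ℝ≥0∞) (k m : ℕ) (x : X) :
    matPow μ k x x ^ m ≤ matPow μ (m * k) x x := by
  induction m with
  | zero => simp
  | succ m ih =>
    calc matPow μ k x x ^ (m + 1) = matPow μ k x x ^ m * matPow μ k x x := pow_succ _ _
      _ ≤ matPow μ (m * k) x x * matPow μ k x x := mul_le_mul' ih le_rfl
      _ ≤ matPow μ (m * k + k) x x := matPow_mul_matPow_le μ _ _ x x x
      _ = matPow μ ((m + 1) * k) x x := by rw [add_mul, one_mul]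

lemma matPow_mono {μ ν : X → X → ℝ≥0∞} (h : μ ≤ ν) (k : ℕ) (x y : X) :
    matPow μ k x y ≤ matPow ν k x y := by
  induction k generalizing y with
  | zero => rfl
  | succ k ih => exact ENNReal.tsum_le_tsum fun z => mul_le_mul' (ih z) (h z y)

lemma matPow_iSup {ι : Type*} [Preorder ι] [IsDirectedOrder ι] [Nonempty ι]
    {ν : ι → X → X → ℝ≥0∞} (hν : Monotone ν) (k : ℕ) (x y : X) :
    matPow (⨆ i, ν i) k x y = ⨆ i, matPow (ν i) k x y := by
  induction k generalizing y with
  | zero => simp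
  | succ k ih =>
    simp only [matPow_succ, ih, iSup_apply]
    rw [← ENNReal.tsum_iSup_of_monotone]
    · congr 1 with z
      exact ENNReal.iSup_mul_iSup_of_monotone (fun i j hij => matPow_mono (hν hij) k x z)
        (fun i j hij => hν hij z y)
    · exact fun i j hij z => mul_le_mul' (matPow_mono (hν hij) k x z) (hν hij z y)

lemma tsum_matPow_le_pow {μ : X → X → ℝ≥0∞} {K : ℝ≥0∞} (hK : ∀ x, ∑' y, μ x y ≤ K)
    (k : ℕ) (x : X) : ∑' y, matPow μ k x y ≤ K ^ k := by
  induction k generalizing x with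
  | zero => simp
  | succ k ih =>
    calc ∑' y, matPow μ (k + 1) x y = ∑' z, matPow μ k x z * ∑' y, μ z y := by
          simp only [matPow_succ]
          rw [ENNReal.tsum_comm]
          simp only [ENNReal.tsum_mul_left]
      _ ≤ ∑' z, matPow μ k x z * K := ENNReal.tsum_le_tsum fun z => mul_le_mul' le_rfl (hK z)
      _ = (∑' z, matPow μ k x z) * K := ENNReal.tsum_mul_right
      _ ≤ K ^ (k + 1) := by rw [pow_succ]; exact mul_le_mul' (ih x) le_rfl

end matPow

section lsRoot

variable {X : Type*}

lemma bddRows.mono {μ ν : X → X → ℝ≥0∞} (h : μ ≤ ν) (hν : bddRows ν) : bddRows μ :=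
  let ⟨K, hKT, hK⟩ := hν
  ⟨K, hKT, fun x => (ENNReal.tsum_le_tsum (h x)).trans (hK x)⟩

variable [DecidableEq X]

lemma bddRows.exists_matPow_le_pow {μ : X → X → ℝ≥0∞} (hμ : bddRows μ) :
    ∃ K : ℝ≥0∞, K ≠ ⊤ ∧ ∀ k x y, matPow μ k x y ≤ K ^ k :=
  let ⟨K, hKT, hK⟩ := hμ
  ⟨K, hKT, fun k x y => (ENNReal.le_tsum y).trans (tsum_matPow_le_pow hK k x)⟩

lemma bddRows.matPow_ne_top {μ : X → X → ℝ≥0∞} (hμ : bddRows μ) (k : ℕ) (x y : X) :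
    matPow μ k x y ≠ ⊤ :=
  let ⟨_, hKT, hK⟩ := hμ.exists_matPow_le_pow
  ne_top_of_le_ne_top (ENNReal.pow_ne_top hKT) (hK k x y)

lemma bddRows.lsRoot_ne_top {μ : X → X → ℝ≥0∞} (hμ : bddRows μ) (x y : X) :
    lsRoot μ x y ≠ ⊤ := by
  obtain ⟨K, hKT, hK⟩ := hμ.exists_matPow_le_pow
  refine ne_top_of_le_ne_top hKT (limsup_le_of_le (by isBoundedDefault) ?_)
  filter_upwards [eventually_ne_atTop 0] with j hj
  calc matPow μ j x y ^ (j : ℝ)⁻¹ ≤ (K ^ j) ^ (j : ℝ)⁻¹ := by gcongr; exact hK j x y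
    _ = K := ENNReal.pow_rpow_inv_natCast hj K

lemma lsRoot_mono {μ ν : X → X → ℝ≥0∞} (h : μ ≤ ν) (x y : X) : lsRoot μ x y ≤ lsRoot ν x y :=
  limsup_le_limsup (.of_forall fun j =>
    ENNReal.rpow_le_rpow (matPow_mono h j x y) (by positivity))

/-- Along the times `m k + l`, the paths `x ⟶ x ⟶ ⋯ ⟶ x ⟶ y` built from `m` loops of length `k`
give `μ^{(m k + l)}(x,y)^{1/(m k + l)} ≥ (μ^{(k)}(x,x)^m μ^{(l)}(x,y))^{1/(m k + l)}`, which tends to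
`μ^{(k)}(x,x)^{1/k}`. -/
lemma rpow_inv_matPow_le_lsRoot {μ : X → X → ℝ≥0∞} {x y : X} {k l : ℕ} (hk : 0 < k)
    (hc0 : matPow μ l x y ≠ 0) (hcT : matPow μ l x y ≠ ⊤) (haT : matPow μ k x x ≠ ⊤) :
    matPow μ k x x ^ (k : ℝ)⁻¹ ≤ lsRoot μ x y := by
  set a := matPow μ k x x
  set c := matPow μ l x y
  rcases eq_or_ne a 0 with ha0 | ha0
  · rw [ha0, ENNReal.zero_rpow_of_pos (by positivity)]
    exact zero_le
  set φ : ℕ → ℕ := fun m => m * k + l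
  have hφ : Tendsto φ atTop atTop :=
    tendsto_atTop_mono (fun m => (Nat.le_mul_of_pos_right m hk).trans (Nat.le_add_right _ _))
      tendsto_id
  set g : ℕ → ℝ≥0∞ := fun m => a ^ ((m : ℝ) / φ m) * c ^ (φ m : ℝ)⁻¹
  have hg_le : ∀ m, g m ≤ matPow μ (φ m) x y ^ (φ m : ℝ)⁻¹ := fun m => by
    calc g m = (a ^ m * c) ^ (φ m : ℝ)⁻¹ := by
          rw [ENNReal.mul_rpow_of_nonneg _ _ (by positivity), ← ENNReal.rpow_natCast,
            ← ENNReal.rpow_mul]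
          simp only [g, div_eq_mul_inv]
      _ ≤ matPow μ (φ m) x y ^ (φ m : ℝ)⁻¹ := by
          gcongr
          exact (mul_le_mul' (pow_matPow_le_matPow_mul μ k m x) le_rfl).trans
            (matPow_mul_matPow_le μ _ _ x x y)
  have h_exp : Tendsto (fun m : ℕ => (m : ℝ) / φ m) atTop (nhds (k : ℝ)⁻¹) := by
    have h_den : Tendsto (fun m : ℕ => (k : ℝ) + l / m) atTop (nhds k) := by
      simpa using tendsto_const_nhds.add (tendsto_const_div_atTop_nhds_zero_nat (l : ℝ))
    refine (h_den.inv₀ (by positivity)).congr' ?_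
    filter_upwards [eventually_ne_atTop 0] with m hm
    simp only [φ]
    push_cast
    field_simp
  have hg : Tendsto g atTop (nhds (a ^ (k : ℝ)⁻¹)) := by
    simpa using ENNReal.Tendsto.mul (ENNReal.tendsto_const_rpow ha0 haT h_exp)
      (Or.inr ENNReal.one_ne_top) ((ENNReal.tendsto_rpow_inv_natCast hc0 hcT).comp hφ)
      (Or.inl one_ne_zero)
  calc a ^ (k : ℝ)⁻¹ = liminf g atTop := hg.liminf_eq.symm
    _ ≤ liminf (fun m => matPow μ (φ m) x y ^ (φ m : ℝ)⁻¹) atTop :=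
        liminf_le_liminf (.of_forall hg_le)
    _ ≤ limsup (fun m => matPow μ (φ m) x y ^ (φ m : ℝ)⁻¹) atTop := liminf_le_limsup
    _ ≤ lsRoot μ x y := hφ.limsup_comp_le_limsup (u := fun j => matPow μ j x y ^ (j : ℝ)⁻¹)

/-- Follows from `μ^{(j)}(x,y) μ^{(l)}(y,x) ≤ μ^{(j+l)}(x,x) ≤ ρ^{j+l}` with `ρ = lsRoot μ x x`. -/
lemma lsRoot_le_lsRoot_self {μ : X → X → ℝ≥0∞} (hμ : bddRows μ) {x y : X} {l : ℕ}
    (hc0 : matPow μ l y x ≠ 0) : lsRoot μ x y ≤ lsRoot μ x x := by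
  set ρ := lsRoot μ x x
  set c := matPow μ l y x
  have h_diag : ∀ j, 0 < j → matPow μ j x x ≤ ρ ^ j := fun j hj => by
    have h := rpow_inv_matPow_le_lsRoot (y := x) (l := 0) hj (by simp) (by simp)
      (hμ.matPow_ne_top j x x)
    simpa [ENNReal.rpow_inv_le_iff (by positivity : (0 : ℝ) < j)] using h
  -- the `+ 1` keeps `C ≠ 0` when `ρ = 0`
  set C := ρ ^ l / c + 1
  have hC0 : C ≠ 0 := by simp [C]
  have hCT : C ≠ ⊤ := by
    have hρT : ρ ≠ ⊤ := hμ.lsRoot_ne_top x x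
    simp [C, ENNReal.div_eq_top, hc0, hρT]
  have h_bound : ∀ j, 0 < j → matPow μ j x y ^ (j : ℝ)⁻¹ ≤ ρ * C ^ (j : ℝ)⁻¹ := fun j hj => by
    have h_entry : matPow μ j x y ≤ ρ ^ j * C :=
      calc matPow μ j x y ≤ ρ ^ (j + l) / c := by
            rw [ENNReal.le_div_iff_mul_le (.inl hc0) (.inl (hμ.matPow_ne_top l y x))]
            exact (matPow_mul_matPow_le μ j l x y x).trans (h_diag _ (by omega))
        _ ≤ ρ ^ j * C := by
            rw [pow_add, mul_div_assoc]
            exact mul_le_mul' le_rfl le_self_add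
    calc matPow μ j x y ^ (j : ℝ)⁻¹ ≤ (ρ ^ j * C) ^ (j : ℝ)⁻¹ := by gcongr
      _ = ρ * C ^ (j : ℝ)⁻¹ := by
          rw [ENNReal.mul_rpow_of_nonneg _ _ (by positivity),
            ENNReal.pow_rpow_inv_natCast hj.ne']
  have h_lim : Tendsto (fun j : ℕ => ρ * C ^ (j : ℝ)⁻¹) atTop (nhds ρ) := by
    simpa using ENNReal.Tendsto.const_mul (ENNReal.tendsto_rpow_inv_natCast hC0 hCT)
      (.inl one_ne_zero)
  calc lsRoot μ x y ≤ limsup (fun j : ℕ => ρ * C ^ (j : ℝ)⁻¹) atTop :=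
        limsup_le_limsup (eventually_gt_atTop 0 |>.mono h_bound)
    _ = ρ := h_lim.limsup_eq

end lsRoot

section diagRoot

variable {X : Type*} [DecidableEq X]

noncomputable def diagRoot (μ : X → X → ℝ≥0∞) (x : X) : ℝ≥0∞ :=
  ⨆ (k : ℕ) (_ : 0 < k), matPow μ k x x ^ (k : ℝ)⁻¹

lemma diagRoot_mono {μ ν : X → X → ℝ≥0∞} (h : μ ≤ ν) (x : X) : diagRoot μ x ≤ diagRoot ν x :=
  iSup₂_mono fun k _ => ENNReal.rpow_le_rpow (matPow_mono h k x x) (by positivity)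

lemma diagRoot_iSup {ν : ℕ → X → X → ℝ≥0∞} (hν : Monotone ν) (x : X) :
    diagRoot (⨆ n, ν n) x = ⨆ n, diagRoot (ν n) x := by
  simp only [diagRoot, matPow_iSup hν]
  rw [iSup_comm]
  refine iSup_congr fun k => ?_
  rw [iSup_comm]
  refine iSup_congr fun hk => ?_
  exact ENNReal.iSup_rpow _ (by positivity)

lemma lsRoot_le_diagRoot (μ : X → X → ℝ≥0∞) (x : X) : lsRoot μ x x ≤ diagRoot μ x :=
  limsup_le_of_le (by isBoundedDefault) <|
    (eventually_gt_atTop 0).mono fun k hk => le_iSup₂_of_le k hk le_rfl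

lemma lsRoot_eq_diagRoot {μ : X → X → ℝ≥0∞} (hμ : bddRows μ) {x y : X}
    (hxy : ∃ l, 0 < matPow μ l x y) (hyx : ∃ l, 0 < matPow μ l y x) :
    lsRoot μ x y = diagRoot μ x := by
  obtain ⟨l, hl⟩ := hxy
  obtain ⟨l', hl'⟩ := hyx
  refine le_antisymm ((lsRoot_le_lsRoot_self hμ hl'.ne').trans (lsRoot_le_diagRoot μ x)) ?_
  exact iSup₂_le fun k hk => rpow_inv_matPow_le_lsRoot hk hl.ne' (hμ.matPow_ne_top l x y)
    (hμ.matPow_ne_top k x x)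

end diagRoot

section restrictW

variable {X : Type*}

lemma restrictW_le (μ : X → X → ℝ≥0∞) (A : Set X) : restrictW μ A ≤ μ := fun x y => by
  unfold restrictW
  split_ifs <;> simp

lemma restrictW_mono (μ : X → X → ℝ≥0∞) {A B : Set X} (h : A ⊆ B) :
    restrictW μ A ≤ restrictW μ B := fun x y => by
  unfold restrictW
  split_ifs with hA hB
  · exact le_rfl
  · exact absurd ⟨h hA.1, h hA.2⟩ hB
  · exact zero_le
  · exact le_rfl

lemma eventually_mem_of_iUnion_eq_univ {S : ℕ → Set X} (hS : Monotone S)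
    (hcover : ⋃ n, S n = Set.univ) (x : X) : ∀ᶠ n in atTop, x ∈ S n := by
  obtain ⟨n, hn⟩ := Set.mem_iUnion.1 (hcover ▸ Set.mem_univ x)
  exact eventually_atTop.2 ⟨n, fun m hm => hS hm hn⟩

lemma iSup_restrictW (μ : X → X → ℝ≥0∞) {S : ℕ → Set X} (hS : Monotone S)
    (hcover : ⋃ n, S n = Set.univ) : ⨆ n, restrictW μ (S n) = μ := by
  ext x y
  rw [iSup_apply, iSup_apply]
  refine le_antisymm (iSup_le fun n => restrictW_le μ (S n) x y) ?_
  obtain ⟨n, hxn, hyn⟩ := ((eventually_mem_of_iUnion_eq_univ hS hcover x).and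
    (eventually_mem_of_iUnion_eq_univ hS hcover y)).exists
  exact le_iSup_of_le n (by simp [restrictW, hxn, hyn])

end restrictW

theorem truncated_convergence_parameter_tendsto_general
    {X : Type*} [DecidableEq X]
    (μ : X → X → ℝ≥0∞) (hbdd : bddRows μ) (hconn : connectedW μ)
    (S : ℕ → Set X) (hmono : ∀ n, S n ⊆ S (n + 1))
    (hcover : ⋃ n, S n = Set.univ)
    (hconnS : ∀ n, ∀ x ∈ S n, ∀ y ∈ S n,
      ∃ k, 0 < k ∧ 0 < matPow (restrictW μ (S n)) k x y) :
    ∀ x y : X,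
      (⨅ n, convR (restrictW μ (S n)) x y) = convR μ x y ∧
      Tendsto (fun n => convR (restrictW μ (S n)) x y) atTop (nhds (convR μ x y)) := by
  intro x y
  have hS : Monotone S := monotone_nat_of_le_succ hmono
  have hν : Monotone fun n => restrictW μ (S n) := fun m n hmn => restrictW_mono μ (hS hmn)
  have h_eq : ∀ᶠ n in atTop, diagRoot (restrictW μ (S n)) x = lsRoot (restrictW μ (S n)) x y := by
    filter_upwards [eventually_mem_of_iUnion_eq_univ hS hcover x,
      eventually_mem_of_iUnion_eq_univ hS hcover y] with n hx hy
    exact (lsRoot_eq_diagRoot (hbdd.mono (restrictW_le μ (S n)))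
      ((hconnS n x hx y hy).imp fun _ => And.right)
      ((hconnS n y hy x hx).imp fun _ => And.right)).symm
  have h_lim : Tendsto (fun n => lsRoot (restrictW μ (S n)) x y) atTop (nhds (lsRoot μ x y)) := by
    rw [lsRoot_eq_diagRoot hbdd ((hconn x y).imp fun _ => And.right)
      ((hconn y x).imp fun _ => And.right)]
    conv_rhs => rw [← iSup_restrictW μ hS hcover, diagRoot_iSup hν]
    exact (tendsto_atTop_iSup fun m n hmn => diagRoot_mono (hν hmn) x).congr' h_eq
  have h_inv : Tendsto (fun n => convR (restrictW μ (S n)) x y) atTop (nhds (convR μ x y)) :=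
    h_lim.inv
  have h_anti : Antitone fun n => convR (restrictW μ (S n)) x y := fun m n hmn =>
    ENNReal.inv_le_inv.2 (lsRoot_mono (hν hmn) x y)
  exact ⟨tendsto_nhds_unique (tendsto_atTop_iInf h_anti) h_inv, h_inv⟩

/-- Lemma 3.1, convergence part: the truncated convergence parameters
`ₙR` decrease to `R_μ`: their infimum equals `R_μ` and they converge to `R_μ`. -/
theorem truncated_convergence_parameter_tendsto
    {X : Type*} [Countable X] [DecidableEq X]
    (μ : X → X → ℝ≥0∞) (hbdd : bddRows μ) (hconn : connectedW μ)
    (S : ℕ → Set X) (hfin : ∀ n, (S n).Finite) (hmono : ∀ n, S n ⊆ S (n + 1))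
    (hcover : ⋃ n, S n = Set.univ)
    (hconnS : ∀ n, ∀ x ∈ S n, ∀ y ∈ S n,
      ∃ k, 0 < k ∧ 0 < matPow (restrictW μ (S n)) k x y) :
    ∀ x y : X,
      (⨅ n, convR (restrictW μ (S n)) x y) = convR μ x y ∧
      Tendsto (fun n => convR (restrictW μ (S n)) x y) atTop (nhds (convR μ x y)) :=
  truncated_convergence_parameter_tendsto_general μ hbdd hconn S hmono hcover hconnS
end

section
/- Let (a_n)_{n≥0} be a nonnegative supermultiplicative sequence, i.e. a_{n+m} ≥ a_n a_m for all n,m ≥ 0, with a_1 > 0 and a_n ≤ M^n for some M > 0 (so that the limit L := lim_{n→∞} a_n^{1/n} exists and lies in (0,∞)). Let r ≥ 1 and k ≥ 0 be integers and let λ > 0 satisfy λ^r · L > 1. Then e^{−t} ∑_{i=0}^∞ a_i (λt)^{ir+k} / (ir+k)! tends to +∞ as t → +∞. -/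
/-!
Choose `n` with `λ ^ (n r) a_n > 1`, possible since `a_n ^ (1/n) → L > λ⁻ʳ`, and put
`q = a_n ^ (1/(n r))`, so that `μ = λ q > 1`. Supermultiplicativity gives `a_{n j} ≥ a_n ^ j`, so
the term `i = n j` of the series is at least `(μ t) ^ m / m! / q ^ k` with `m = j n r + k`.
Choosing `j` with `m ≤ μ t < m + n r`, the upper Stirling bound `m! ≤ m ^ (m + 1) e ^ (1 - m)`
makes this at least `e ^ (μ t - n r - 1) / (μ t q ^ k)`, and `e ^ (-t)` times that grows like
`e ^ ((μ - 1) t) / t`.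
-/

open Filter Real Nat

theorem factorial_le_pow_succ_mul_exp {m : ℕ} (hm : m ≠ 0) :
    (m ! : ℝ) ≤ m ^ (m + 1) * exp (1 - m) := by
  obtain ⟨n, rfl⟩ := exists_eq_succ_of_ne_zero hm
  have hseq : Stirling.stirlingSeq (n + 1) ≤ exp 1 / √2 := by
    simpa using Stirling.stirlingSeq'_antitone (Nat.zero_le n)
  set x : ℝ := ((n + 1 : ℕ) : ℝ)
  have hx : 1 ≤ x := by simp [x]
  have hpos : 0 < √(2 * x) * (x / exp 1) ^ (n + 1) := by positivity
  rw [Stirling.stirlingSeq, div_le_iff₀ hpos] at hseq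
  calc ((n + 1) ! : ℝ) ≤ exp 1 / √2 * (√(2 * x) * (x / exp 1) ^ (n + 1)) := hseq
    _ = exp 1 * √x * x ^ (n + 1) / exp 1 ^ (n + 1) := by
        rw [sqrt_mul zero_le_two, div_pow]; field_simp
    _ ≤ exp 1 * x * x ^ (n + 1) / exp 1 ^ (n + 1) := by
        gcongr; exact sqrt_le_self_iff.2 (Or.inr hx)
    _ = x ^ (n + 1 + 1) * exp (1 - x) := by
        rw [exp_sub, ← exp_nat_mul, mul_one]; field_simp; ring

theorem exp_sub_div_le_pow_div_factorial {m : ℕ} (hm : m ≠ 0) {x s : ℝ} (hmx : m ≤ x)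
    (hxs : x ≤ m + s) : exp (x - s - 1) / x ≤ x ^ m / m ! := by
  have hx0 : 0 < x := (cast_pos.2 (pos_of_ne_zero hm)).trans_le hmx
  have hexp : exp (m - 1) * exp (1 - m) = 1 := by rw [← exp_add]; simp
  calc exp (x - s - 1) / x ≤ exp (m - 1) / x := by gcongr; linarith
    _ = x ^ m / (x ^ (m + 1) * exp (1 - m)) := by
        field_simp
        linear_combination x ^ (m + 1) * hexp
    _ ≤ x ^ m / (m ^ (m + 1) * exp (1 - m)) := by gcongr
    _ ≤ x ^ m / m ! := by gcongr; exact factorial_le_pow_succ_mul_exp hm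

theorem exists_exp_sub_div_le_pow_mul_add_div_factorial {R : ℕ} (hR : 0 < R) (k : ℕ) {x : ℝ}
    (hx : k + R ≤ x) : ∃ j, 0 < j ∧ exp (x - R - 1) / x ≤ x ^ (j * R + k) / (j * R + k) ! := by
  have hR' : (0 : ℝ) < R := cast_pos.2 hR
  set j := ⌊(x - k) / R⌋₊
  have hj : 0 < j := floor_pos.2 <| (le_div_iff₀ hR').2 (by linarith)
  have hjle : (j : ℝ) * R ≤ x - k :=
    (le_div_iff₀ hR').1 (floor_le (div_nonneg (by linarith) hR'.le))
  have hjlt : x - k < (j + 1) * R := (div_lt_iff₀ hR').1 (lt_floor_add_one _)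
  refine ⟨j, hj, exp_sub_div_le_pow_div_factorial (by positivity) ?_ ?_⟩ <;> push_cast <;> linarith

theorem pow_le_apply_mul_of_supermultiplicative {R : Type*} [Semiring R] [PartialOrder R]
    [IsOrderedRing R] {a : ℕ → R} (ha0 : ∀ n, 0 ≤ a n) (hsm : ∀ n m, a n * a m ≤ a (n + m))
    (n : ℕ) {j : ℕ} (hj : 0 < j) : a n ^ j ≤ a (n * j) := by
  induction j, hj using Nat.le_induction with
  | base => simp
  | succ j _ ih =>
    calc a n ^ (j + 1) = a n ^ j * a n := pow_succ _ _
      _ ≤ a (n * j) * a n := mul_le_mul_of_nonneg_right ih (ha0 n)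
      _ ≤ a (n * (j + 1)) := hsm _ _

theorem exists_one_lt_pow_mul_of_tendsto_rpow_inv {a : ℕ → ℝ} (ha0 : ∀ n, 0 ≤ a n) {L b : ℝ}
    (hL : Tendsto (fun n : ℕ => a n ^ (n : ℝ)⁻¹) atTop (nhds L)) (hb : 0 < b) (hbL : 1 < b * L) :
    ∃ n, 0 < n ∧ 1 < b ^ n * a n := by
  have hlt : b⁻¹ < L := by rwa [inv_lt_iff_one_lt_mul₀' hb]
  obtain ⟨n, hroot, hn⟩ :=
    ((hL.eventually (eventually_gt_nhds hlt)).and (eventually_gt_atTop 0)).exists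
  refine ⟨n, hn, ?_⟩
  have := pow_lt_pow_left₀ hroot (by positivity) hn.ne'
  rwa [rpow_inv_natCast_pow (ha0 n) hn.ne', inv_pow,
    inv_lt_iff_one_lt_mul₀' (by positivity)] at this

theorem summable_mul_pow_mul_add_div_factorial {a : ℕ → ℝ} (ha0 : ∀ n, 0 ≤ a n) {M : ℝ}
    (hbd : ∀ n, a n ≤ M ^ n) {r : ℕ} (hr : 0 < r) (k : ℕ) (x : ℝ) :
    Summable fun i : ℕ => a i * x ^ (i * r + k) / (i * r + k) ! := by
  set B := max |M| 1
  have hinj : Function.Injective fun i : ℕ => i * r + k := fun i j h =>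
    Nat.eq_of_mul_eq_mul_right hr (Nat.add_right_cancel h)
  refine ((Real.summable_pow_div_factorial (B * |x|)).comp_injective hinj).of_norm_bounded
    fun i => ?_
  have hai : a i ≤ B ^ (i * r + k) :=
    calc a i ≤ M ^ i := hbd i
      _ ≤ B ^ i := (le_abs_self _).trans <| by
          rw [abs_pow]; exact pow_le_pow_left₀ (abs_nonneg M) (le_max_left _ _) i
      _ ≤ B ^ (i * r + k) := pow_le_pow_right₀ (le_max_right _ _) <|
          (Nat.le_mul_of_pos_right i hr).trans (Nat.le_add_right _ _)
  simp only [Function.comp_apply, norm_div, norm_mul, norm_pow, Real.norm_eq_abs,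
    abs_of_nonneg (ha0 i), Nat.abs_cast, mul_pow]
  gcongr

theorem pow_mul_pow_div_factorial_le_tsum {a : ℕ → ℝ} (ha0 : ∀ n, 0 ≤ a n)
    (hsm : ∀ n m, a n * a m ≤ a (n + m)) {M : ℝ} (hbd : ∀ n, a n ≤ M ^ n) {r : ℕ} (hr : 0 < r)
    (k : ℕ) {x : ℝ} (hx : 0 ≤ x) (n : ℕ) {j : ℕ} (hj : 0 < j) :
    a n ^ j * x ^ (j * (n * r) + k) / (j * (n * r) + k) ! ≤
      ∑' i : ℕ, a i * x ^ (i * r + k) / (i * r + k) ! := by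
  rw [show j * (n * r) = n * j * r by ring]
  calc a n ^ j * x ^ (n * j * r + k) / (n * j * r + k) !
      ≤ a (n * j) * x ^ (n * j * r + k) / (n * j * r + k) ! := by
        gcongr; exact pow_le_apply_mul_of_supermultiplicative ha0 hsm n hj
    _ ≤ _ := (summable_mul_pow_mul_add_div_factorial ha0 hbd hr k x).le_tsum (n * j)
        fun i _ => by have := ha0 i; positivity

theorem exp_sub_div_le_pow_mul_tsum {a : ℕ → ℝ} (ha0 : ∀ n, 0 ≤ a n)
    (hsm : ∀ n m, a n * a m ≤ a (n + m)) {M : ℝ} (hbd : ∀ n, a n ≤ M ^ n) {r : ℕ} (hr : 0 < r)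
    (k : ℕ) {n : ℕ} (hn : 0 < n) {q : ℝ} (hqR : q ^ (n * r) = a n) {x : ℝ} (hx : 0 ≤ x)
    (hqx : k + (n * r : ℕ) ≤ q * x) :
    exp (q * x - (n * r : ℕ) - 1) / (q * x) ≤
      q ^ k * ∑' i : ℕ, a i * x ^ (i * r + k) / (i * r + k) ! := by
  have hR : 0 < n * r := Nat.mul_pos hn hr
  have hq : 0 < q := pos_of_mul_pos_left
    (lt_of_lt_of_le (by have : (0 : ℝ) < (n * r : ℕ) := cast_pos.2 hR; positivity) hqx) hx
  obtain ⟨j, hj, hterm⟩ := exists_exp_sub_div_le_pow_mul_add_div_factorial hR k hqx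
  have hpow : (q * x) ^ (j * (n * r) + k) = q ^ k * (a n ^ j * x ^ (j * (n * r) + k)) := by
    rw [← hqR, mul_pow, pow_add q, mul_comm j, pow_mul]; ring
  calc _ ≤ (q * x) ^ (j * (n * r) + k) / (j * (n * r) + k) ! := hterm
    _ = q ^ k * (a n ^ j * x ^ (j * (n * r) + k) / (j * (n * r) + k) !) := by
        rw [hpow, mul_div_assoc]
    _ ≤ _ := by
        gcongr
        exact pow_mul_pow_div_factorial_le_tsum ha0 hsm hbd hr k hx n hj

theorem supermultiplicative_series_tendsto_atTop_general
    (a : ℕ → ℝ) (ha0 : ∀ n, 0 ≤ a n)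
    (hsm : ∀ n m, a n * a m ≤ a (n + m))
    (M : ℝ) (hbd : ∀ n, a n ≤ M ^ n)
    (L : ℝ) (hL : Tendsto (fun n : ℕ => a n ^ (n : ℝ)⁻¹) atTop (nhds L))
    (r k : ℕ) (hr : 1 ≤ r)
    (lam : ℝ) (hlam : 0 < lam) (hcrit : 1 < lam ^ r * L) :
    Tendsto
      (fun t : ℝ =>
        Real.exp (-t) *
          ∑' i : ℕ, a i * (lam * t) ^ (i * r + k) / (Nat.factorial (i * r + k) : ℝ))
      atTop atTop := by
  obtain ⟨n, hn, hgrowth⟩ := exists_one_lt_pow_mul_of_tendsto_rpow_inv ha0 hL (pow_pos hlam r) hcrit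
  have hR : 0 < n * r := Nat.mul_pos hn hr
  set q := a n ^ ((n * r : ℕ) : ℝ)⁻¹
  have hq : 0 < q :=
    rpow_pos_of_pos (pos_of_mul_pos_right (one_pos.trans hgrowth) (by positivity)) _
  have hqR : q ^ (n * r) = a n := rpow_inv_natCast_pow (ha0 n) hR.ne'
  have hμ : 1 < lam * q := (one_lt_pow_iff_of_nonneg (by positivity) hR.ne').1 <| by
    rw [mul_pow, hqR]; rwa [← pow_mul, mul_comm r n] at hgrowth
  set C := exp (-(n * r : ℕ) - 1) / (lam * q * q ^ k) with hC
  refine tendsto_atTop_mono' _ ?_ <|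
    (tendsto_exp_mul_div_rpow_atTop 1 _ (sub_pos.2 hμ)).const_mul_atTop (by positivity : 0 < C)
  filter_upwards [eventually_ge_atTop ((k + (n * r : ℕ)) / (lam * q))] with t ht
  have ht0 : 0 < t :=
    lt_of_lt_of_le (by have : (0 : ℝ) < (n * r : ℕ) := cast_pos.2 hR; positivity) ht
  have hbound := exp_sub_div_le_pow_mul_tsum ha0 hsm hbd hr k hn hqR (x := lam * t) (by positivity)
    (by rwa [← mul_assoc, mul_comm q, ← div_le_iff₀' (by positivity)])
  calc C * (exp ((lam * q - 1) * t) / t ^ (1 : ℝ))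
      = exp (-t) * (exp (q * (lam * t) - (n * r : ℕ) - 1) / (q * (lam * t)) / q ^ k) := by
        rw [hC, rpow_one,
          show q * (lam * t) - (n * r : ℕ) - 1 = (-(n * r : ℕ) - 1) + (lam * q - 1) * t + t by ring,
          exp_add, exp_add, exp_neg]
        field_simp
    _ ≤ _ := by
        gcongr
        rw [div_le_iff₀' (by positivity)]
        exact hbound

/-- for a nonnegative supermultiplicative sequence `a` with `a 1 > 0`,
`a n ≤ M^n`, with `L = lim a_n^{1/n}` and `λ^r · L > 1`, the function
`t ↦ e^{-t} ∑_i a_i (λ t)^{ir+k} / (ir+k)!` tends to `+∞` as `t → +∞`. -/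
theorem supermultiplicative_series_tendsto_atTop
    (a : ℕ → ℝ) (ha0 : ∀ n, 0 ≤ a n)
    (hsm : ∀ n m, a n * a m ≤ a (n + m))
    (ha1 : 0 < a 1)
    (M : ℝ) (hM : 0 < M) (hbd : ∀ n, a n ≤ M ^ n)
    (L : ℝ) (hL : Tendsto (fun n : ℕ => a n ^ (n : ℝ)⁻¹) atTop (nhds L))
    (r k : ℕ) (hr : 1 ≤ r)
    (lam : ℝ) (hlam : 0 < lam) (hcrit : 1 < lam ^ r * L) :
    Tendsto
      (fun t : ℝ =>
        Real.exp (-t) *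
          ∑' i : ℕ, a i * (lam * t) ^ (i * r + k) / (Nat.factorial (i * r + k) : ℝ))
      atTop atTop :=
  supermultiplicative_series_tendsto_atTop_general a ha0 hsm M hbd L hL r k hr lam hlam hcrit
end

section
/- Let (X,μ) and (I,ν) be weighted graphs with bounded row sums, and let f : X → I be a local isomorphism, i.e. ∑_{z ∈ f^{-1}(i)} μ(x,z) = ν(f(x), i) for all x ∈ X and i ∈ I. Then for every n ≥ 0, every x ∈ X and every i ∈ I, ∑_{z ∈ f^{-1}(i)} μ^{(n)}(x,z) = ν^{(n)}(f(x), i). -/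
open Filter MeasureTheory ProbabilityTheory
open scoped ENNReal NNReal

/-- `f : X → I` is a local isomorphism of `(X, μ)` on `(I, ν)`:
`∑_{z ∈ f⁻¹(i)} μ(x, z) = ν(f x, i)` for all `x, i`. -/
def IsLocalIsom {X I : Type*} (μ : X → X → ℝ≥0∞) (ν : I → I → ℝ≥0∞) (f : X → I) : Prop :=
  ∀ (x : X) (i : I), ∑' z : {z : X // f z = i}, μ x z.1 = ν (f x) i

section

variable {X I : Type*}

lemma tsum_fiber_ite_eq [DecidableEq X] [DecidableEq I] (f : X → I) (x : X) (i : I) :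
    ∑' z : {z : X // f z = i}, (if x = z.1 then 1 else 0 : ℝ≥0∞) = if f x = i then 1 else 0 := by
  split_ifs with hx
  · rw [tsum_eq_single ⟨x, hx⟩ fun z hz => if_neg fun h => hz (Subtype.ext h.symm), if_pos rfl]
  · exact ENNReal.tsum_eq_zero.2 fun z => if_neg fun h : x = z.1 => hx (h ▸ z.2)

lemma tsum_mul_comp_eq_tsum_fiber (g : X → ℝ≥0∞) (ρ : I → ℝ≥0∞) (f : X → I) :
    ∑' w, g w * ρ (f w) = ∑' j, (∑' w : {w : X // f w = j}, g w) * ρ j := by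
  rw [← ENNReal.tsum_fiberwise _ f]
  refine tsum_congr fun j => ?_
  rw [← ENNReal.tsum_mul_right]
  exact tsum_congr fun w => by rw [w.2]

/-- Summing over fibres of a local isomorphism intertwines the actions of `μ` and `ν`
on row vectors. -/
lemma IsLocalIsom.tsum_fiber_vecMul {μ : X → X → ℝ≥0∞} {ν : I → I → ℝ≥0∞} {f : X → I}
    (hf : IsLocalIsom μ ν f) (g : X → ℝ≥0∞) (i : I) :
    ∑' z : {z : X // f z = i}, ∑' w, g w * μ w z.1 =
      ∑' j, (∑' w : {w : X // f w = j}, g w) * ν j i := by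
  calc ∑' z : {z : X // f z = i}, ∑' w, g w * μ w z.1
      = ∑' w, g w * ∑' z : {z : X // f z = i}, μ w z.1 := by
        rw [ENNReal.tsum_comm]
        simp only [ENNReal.tsum_mul_left]
    _ = ∑' w, g w * ν (f w) i := by simp only [hf _ i]
    _ = ∑' j, (∑' w : {w : X // f w = j}, g w) * ν j i := tsum_mul_comp_eq_tsum_fiber g (ν · i) f

end

theorem localIsom_matPow_general
    {X I : Type*} [DecidableEq X] [DecidableEq I]
    (μ : X → X → ℝ≥0∞) (ν : I → I → ℝ≥0∞)
    (f : X → I) (hf : IsLocalIsom μ ν f) :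
    ∀ (n : ℕ) (x : X) (i : I),
      ∑' z : {z : X // f z = i}, matPow μ n x z.1 = matPow ν n (f x) i := by
  intro n x
  induction n with
  | zero => exact tsum_fiber_ite_eq f x
  | succ n ih =>
    intro i
    simp only [matPow, hf.tsum_fiber_vecMul, ih]

/-- a local isomorphism projects all matrix powers:
`∑_{z ∈ f⁻¹(i)} μ^{(n)}(x, z) = ν^{(n)}(f x, i)`. -/
theorem localIsom_matPow
    {X I : Type*} [Countable X] [DecidableEq X] [Countable I] [DecidableEq I]
    (μ : X → X → ℝ≥0∞) (ν : I → I → ℝ≥0∞)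
    (hμ : bddRows μ) (hν : bddRows ν)
    (f : X → I) (hf : IsLocalIsom μ ν f) :
    ∀ (n : ℕ) (x : X) (i : I),
      ∑' z : {z : X // f z = i}, matPow μ n x z.1 = matPow ν n (f x) i :=
  localIsom_matPow_general μ ν f hf
end

section
/- Let p, q > 0 with p + q ≤ 1, and let P be the random walk kernel on ℤ given by p(i,i+1) = p, p(i,i−1) = q, p(i,i) = 1 − p − q, and p(i,j) = 0 if |i − j| > 1. Then for all natural numbers a, b, c with a + b + c = n, the n-step transition probabilities satisfy p^{(n)}(0, a − b) ≥ (n! / (a! b! c!)) · p^a · q^b · (1 − p − q)^c. -/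
open Filter MeasureTheory ProbabilityTheory
open scoped ENNReal NNReal

/-- The random walk kernel on `ℤ` stepping `+1` with probability `p`, `-1` with
probability `q` and staying put with probability `1 - p - q`. -/
noncomputable def driftKernel (p q : ℝ) : ℤ → ℤ → ℝ≥0∞ := fun i j =>
  if j = i + 1 then ENNReal.ofReal p
  else if j = i - 1 then ENNReal.ofReal q
  else if j = i then ENNReal.ofReal (1 - p - q)
  else 0

/-!
Condition on the last step. Splitting `a + b + c = n + 1` as the sum of its three parts gives
the Pascal rule `T(a,b,c) = T(a-1,b,c) p + T(a,b-1,c) q + T(a,b,c-1) (1-p-q)` for the trinomial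
terms, whose three summands are bounded, by induction on `n`, by the contributions of the
neighbours `y - 1`, `y + 1`, `y` of `y = a - b` to `p^{(n+1)}(0, y)`.
-/

open scoped Nat

theorem sum_le_matPow_succ {X : Type*} [DecidableEq X] (μ : X → X → ℝ≥0∞) (n : ℕ) (x y : X)
    (s : Finset X) : ∑ z ∈ s, matPow μ n x z * μ z y ≤ matPow μ (n + 1) x y :=
  ENNReal.sum_le_tsum s

section driftKernel

variable (p q : ℝ) (y : ℤ)

theorem driftKernel_sub_one_self : driftKernel p q (y - 1) y = ENNReal.ofReal p := by
  simp [driftKernel]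

theorem driftKernel_add_one_self : driftKernel p q (y + 1) y = ENNReal.ofReal q := by
  rw [driftKernel, if_neg (by omega), if_pos (by ring)]

theorem driftKernel_self : driftKernel p q y y = ENNReal.ofReal (1 - p - q) := by
  rw [driftKernel, if_neg (by omega), if_neg (by omega), if_pos rfl]

end driftKernel

noncomputable def trinomialTerm (p q r : ℝ) (a b c : ℕ) : ℝ :=
  ((a + b + c)! : ℝ) / (a ! * b ! * c !) * p ^ a * q ^ b * r ^ c

section trinomialTerm

variable {p q r : ℝ} (a b c : ℕ)

theorem trinomialTerm_nonneg (hp : 0 ≤ p) (hq : 0 ≤ q) (hr : 0 ≤ r) :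
    0 ≤ trinomialTerm p q r a b c := by
  unfold trinomialTerm; positivity

theorem div_mul_trinomialTerm_succ_left :
    (a + 1 : ℕ) / (a + 1 + b + c : ℕ) * trinomialTerm p q r (a + 1) b c
      = trinomialTerm p q r a b c * p := by
  unfold trinomialTerm
  rw [show a + 1 + b + c = (a + b + c) + 1 by ring, Nat.factorial_succ (a + b + c),
    Nat.factorial_succ a]
  push_cast
  field_simp
  ring

theorem div_mul_trinomialTerm_succ_middle :
    (b + 1 : ℕ) / (a + (b + 1) + c : ℕ) * trinomialTerm p q r a (b + 1) c
      = trinomialTerm p q r a b c * q := by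
  unfold trinomialTerm
  rw [show a + (b + 1) + c = (a + b + c) + 1 by ring, Nat.factorial_succ (a + b + c),
    Nat.factorial_succ b]
  push_cast
  field_simp
  ring

theorem div_mul_trinomialTerm_succ_right :
    (c + 1 : ℕ) / (a + b + (c + 1) : ℕ) * trinomialTerm p q r a b (c + 1)
      = trinomialTerm p q r a b c * r := by
  unfold trinomialTerm
  rw [show a + b + (c + 1) = (a + b + c) + 1 by ring, Nat.factorial_succ (a + b + c),
    Nat.factorial_succ c]
  push_cast
  field_simp
  ring

theorem ofReal_trinomialTerm_eq_add_shares (hp : 0 ≤ p) (hq : 0 ≤ q) (hr : 0 ≤ r)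
    (h : a + b + c ≠ 0) :
    ENNReal.ofReal (trinomialTerm p q r a b c)
      = ENNReal.ofReal (a / (a + b + c : ℕ) * trinomialTerm p q r a b c)
        + ENNReal.ofReal (b / (a + b + c : ℕ) * trinomialTerm p q r a b c)
        + ENNReal.ofReal (c / (a + b + c : ℕ) * trinomialTerm p q r a b c) := by
  have hT := trinomialTerm_nonneg a b c hp hq hr
  have hN : ((a + b + c : ℕ) : ℝ) ≠ 0 := by exact_mod_cast h
  rw [← ENNReal.ofReal_add (by positivity) (by positivity),
    ← ENNReal.ofReal_add (by positivity) (by positivity)]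
  congr 1
  field_simp
  push_cast
  ring

end trinomialTerm

theorem ofReal_trinomialTerm_le_matPow_driftKernel {p q : ℝ} (hp : 0 ≤ p) (hq : 0 ≤ q)
    (hpq : p + q ≤ 1) : ∀ n a b c : ℕ, a + b + c = n →
      ENNReal.ofReal (trinomialTerm p q (1 - p - q) a b c)
        ≤ matPow (driftKernel p q) n 0 ((a : ℤ) - b)
  | 0, a, b, c, h => by
    obtain ⟨rfl, rfl, rfl⟩ : a = 0 ∧ b = 0 ∧ c = 0 := by omega
    simp [trinomialTerm, matPow]
  | n + 1, a, b, c, h => by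
    have hr : 0 ≤ 1 - p - q := by linarith
    set T := trinomialTerm p q (1 - p - q) a b c
    generalize hy : (a : ℤ) - b = y
    have left : ENNReal.ofReal (a / (a + b + c : ℕ) * T)
        ≤ matPow (driftKernel p q) n 0 (y - 1) * driftKernel p q (y - 1) y := by
      rcases a with _ | a
      · simp
      rw [div_mul_trinomialTerm_succ_left, driftKernel_sub_one_self,
        ENNReal.ofReal_mul (trinomialTerm_nonneg a b c hp hq hr)]
      gcongr
      rw [show y - 1 = a - b by omega]
      exact ofReal_trinomialTerm_le_matPow_driftKernel hp hq hpq n a b c (by omega)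
    have middle : ENNReal.ofReal (b / (a + b + c : ℕ) * T)
        ≤ matPow (driftKernel p q) n 0 (y + 1) * driftKernel p q (y + 1) y := by
      rcases b with _ | b
      · simp
      rw [div_mul_trinomialTerm_succ_middle, driftKernel_add_one_self,
        ENNReal.ofReal_mul (trinomialTerm_nonneg a b c hp hq hr)]
      gcongr
      rw [show y + 1 = a - b by omega]
      exact ofReal_trinomialTerm_le_matPow_driftKernel hp hq hpq n a b c (by omega)
    have right : ENNReal.ofReal (c / (a + b + c : ℕ) * T)
        ≤ matPow (driftKernel p q) n 0 y * driftKernel p q y y := by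
      rcases c with _ | c
      · simp
      rw [div_mul_trinomialTerm_succ_right, driftKernel_self,
        ENNReal.ofReal_mul (trinomialTerm_nonneg a b c hp hq hr)]
      gcongr
      rw [← hy]
      exact ofReal_trinomialTerm_le_matPow_driftKernel hp hq hpq n a b c (by omega)
    calc ENNReal.ofReal T
        = ENNReal.ofReal (a / (a + b + c : ℕ) * T) + ENNReal.ofReal (b / (a + b + c : ℕ) * T)
          + ENNReal.ofReal (c / (a + b + c : ℕ) * T) :=
          ofReal_trinomialTerm_eq_add_shares a b c hp hq hr (by omega)
      _ ≤ ∑ z ∈ {y - 1, y + 1, y}, matPow (driftKernel p q) n 0 z * driftKernel p q z y := by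
          rw [Finset.sum_insert (by simp; omega), Finset.sum_insert (by simp), Finset.sum_singleton,
            ← add_assoc]
          gcongr
      _ ≤ matPow (driftKernel p q) (n + 1) 0 y := sum_le_matPow_succ _ n 0 y _

/-- multinomial lower bound for the `n`-step transition probabilities of
the drifting random walk on `ℤ`: for `a + b + c = n`,
`p^{(n)}(0, a - b) ≥ n!/(a! b! c!) · p^a q^b (1-p-q)^c`. -/
theorem driftKernel_multinomial_lower_bound
    (p q : ℝ) (hp : 0 < p) (hq : 0 < q) (hpq : p + q ≤ 1) :
    ∀ (n a b c : ℕ), a + b + c = n →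
      ENNReal.ofReal
          ((Nat.factorial n : ℝ) /
              (Nat.factorial a * Nat.factorial b * Nat.factorial c) *
            p ^ a * q ^ b * (1 - p - q) ^ c) ≤
        matPow (driftKernel p q) n 0 ((a : ℤ) - (b : ℤ)) := by
  rintro n a b c rfl
  exact ofReal_trinomialTerm_le_matPow_driftKernel hp.le hq.le hpq _ a b c rfl
end

section
/- Let (X,μ) be a connected non-oriented weighted graph with bounded geometry and bounded row sums, with edge set E(X) and convergence parameter R_μ. Let (p_n) be a sequence in [0,1] with ∑_n (1 − p_n) < ∞, and let (ω_n)_{n∈ℕ} be independent percolation configurations, ω_n distributed as Bernoulli bond percolation on E(X) with parameter p_n. Then, almost surely, λ_s(Y^a_{ω_n}) := inf_{x∈X} r_{ω_n}(x) converges to R_μ as n → ∞. -/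
open Filter MeasureTheory ProbabilityTheory
open scoped ENNReal NNReal

/-- `e` is an edge of the weighted graph `(X, μ)`. -/
def IsEdgeW {X : Type*} (μ : X → X → ℝ≥0∞) (e : Sym2 X) : Prop :=
  ∃ x y : X, e = s(x, y) ∧ 0 < μ x y

open Classical in
/-- The weight kernel obtained from `μ` by keeping only the edges that are open in the
percolation configuration `c`. -/
noncomputable def percW {X : Type*} (μ : X → X → ℝ≥0∞)
    (c : {e : Sym2 X // IsEdgeW μ e} → Bool) : X → X → ℝ≥0∞ := fun x y =>
  if h : IsEdgeW μ s(x, y) then (if c ⟨s(x, y), h⟩ then μ x y else 0) else 0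

/-- The open cluster of `x` in the configuration `c`: all vertices reachable from `x`
through open edges. -/
def clusterW {X : Type*} [DecidableEq X] (μ : X → X → ℝ≥0∞)
    (c : {e : Sym2 X // IsEdgeW μ e} → Bool) (x : X) : Set X :=
  {y : X | ∃ n : ℕ, 0 < matPow (percW μ c) n x y}

/-- `(X, μ)` is non-oriented: `μ(x,y) > 0` iff `μ(y,x) > 0`. -/
def nonOrientedW {X : Type*} (μ : X → X → ℝ≥0∞) : Prop :=
  ∀ x y : X, 0 < μ x y ↔ 0 < μ y x

/-- `(X, μ)` has bounded geometry: uniformly bounded number of neighbours. -/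
def bddGeometryW {X : Type*} (μ : X → X → ℝ≥0∞) : Prop :=
  ∃ D : ℕ, ∀ x : X, ({y : X | 0 < μ x y}).Finite ∧ ({y : X | 0 < μ x y}).ncard ≤ D


/-!
Removing edges only lowers the `n`-step weights, so every cluster has convergence parameter at
least `R_μ`, which by connectedness does not depend on the base points. Conversely, by
supermultiplicativity of `n ↦ μ_ω^{(n)}(x,x)`, every single root `μ_ω^{(m)}(x,x)^{1/m}` is a
lower bound for `1 / r_ω(x)`. Under bounded geometry `μ_ω^{(m)}(x,x) = μ^{(m)}(x,x)` as soon as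
the finitely many edges within distance `m` of `x` are open in `ω`; since `∑ₙ (1 - pₙ) < ∞`,
Borel–Cantelli shows that almost surely this holds for `ωₙ` for every large `n`. Choosing `m`
with `μ^{(m)}(x,x)^{1/m}` close to `1 / R_μ` gives the upper bound.
-/

namespace WeightedGraph

variable {X : Type*} {μ ν : X → X → ℝ≥0∞}

lemma percW_le (c : {e : Sym2 X // IsEdgeW μ e} → Bool) (x y : X) : percW μ c x y ≤ μ x y := by
  unfold percW
  split_ifs <;> simp

variable [DecidableEq X]

lemma matPow_mono (h : ∀ x y, ν x y ≤ μ x y) (n : ℕ) (x y : X) :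
    matPow ν n x y ≤ matPow μ n x y := by
  induction n generalizing y with
  | zero => rfl
  | succ n ih => exact ENNReal.tsum_le_tsum fun z => mul_le_mul' (ih z) (h z y)

lemma matPow_add (m n : ℕ) (x y : X) :
    matPow μ (m + n) x y = ∑' z, matPow μ m x z * matPow μ n z y := by
  induction n generalizing y with
  | zero =>
    simp only [Nat.add_zero, matPow, mul_ite, mul_one, mul_zero]
    rw [tsum_ite_eq]
  | succ n ih =>
    calc matPow μ (m + n + 1) x y
        = ∑' z, ∑' w, matPow μ m x w * matPow μ n w z * μ z y := by
          simp only [matPow, ih, ENNReal.tsum_mul_right]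
      _ = ∑' w, matPow μ m x w * ∑' z, matPow μ n w z * μ z y := by
          rw [ENNReal.tsum_comm]
          simp only [mul_assoc, ENNReal.tsum_mul_left]

lemma mul_le_matPow_add (m n : ℕ) (x z y : X) :
    matPow μ m x z * matPow μ n z y ≤ matPow μ (m + n) x y :=
  matPow_add m n x y ▸ ENNReal.le_tsum z

lemma pow_le_matPow_mul (m k : ℕ) (x : X) :
    matPow μ m x x ^ k ≤ matPow μ (k * m) x x := by
  induction k with
  | zero => simp [matPow]
  | succ k ih =>
    calc matPow μ m x x ^ (k + 1) = matPow μ m x x ^ k * matPow μ m x x := pow_succ _ _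
      _ ≤ matPow μ (k * m) x x * matPow μ m x x := mul_le_mul' ih le_rfl
      _ ≤ matPow μ ((k + 1) * m) x x := by
          rw [Nat.succ_mul]; exact mul_le_matPow_add _ _ _ _ _

lemma rpow_inv_le_lsRoot (x : X) {m : ℕ} (hm : m ≠ 0) :
    matPow μ m x x ^ (m : ℝ)⁻¹ ≤ lsRoot μ x x := by
  refine le_limsup_of_frequently_le' (frequently_atTop.2 fun N => ⟨(N + 1) * m, ?_, ?_⟩)
  · nlinarith [Nat.one_le_iff_ne_zero.2 hm]
  · calc matPow μ m x x ^ (m : ℝ)⁻¹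
        = (matPow μ m x x ^ (N + 1)) ^ (((N + 1) * m : ℕ) : ℝ)⁻¹ := by
          rw [← ENNReal.rpow_natCast, ← ENNReal.rpow_mul]
          congr 1
          push_cast
          field_simp
      _ ≤ matPow μ ((N + 1) * m) x x ^ (((N + 1) * m : ℕ) : ℝ)⁻¹ :=
          ENNReal.rpow_le_rpow (pow_le_matPow_mul m (N + 1) x) (by positivity)

lemma eventually_le_rpow_inv_mul_pow {c t t' : ℝ≥0∞} (hc : c ≠ 0) (ht : t ≠ ⊤) (ht' : t' < t)
    (k : ℕ) : ∀ᶠ n : ℕ in atTop, t' ≤ (c * t ^ n) ^ ((n + k : ℕ) : ℝ)⁻¹ := by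
  have ht0 : t ≠ 0 := (zero_le.trans_lt ht').ne'
  have hratio : t' / t < 1 := (ENNReal.div_lt_iff (.inl ht0) (.inl ht)).2 (by simpa using ht')
  have hsmall : Tendsto (fun n : ℕ => (t' / t) ^ n * t' ^ k) atTop (nhds 0) := by
    simpa using ENNReal.Tendsto.mul_const (ENNReal.tendsto_pow_atTop_nhds_zero_of_lt_one hratio)
      (.inr (ENNReal.pow_ne_top ht'.ne_top))
  filter_upwards [hsmall.eventually_lt_const (pos_iff_ne_zero.2 hc), eventually_ge_atTop 1]
    with n hn hn1
  rw [ENNReal.le_rpow_inv_iff (by positivity), ENNReal.rpow_natCast]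
  calc t' ^ (n + k) = (t' / t) ^ n * t' ^ k * t ^ n := by
        rw [mul_right_comm, ← mul_pow, ENNReal.div_mul_cancel ht0 ht, pow_add]
    _ ≤ c * t ^ n := mul_le_mul' hn.le le_rfl

lemma lsRoot_le_lsRoot_of_pos {x y z w : X} {a b : ℕ} (ha : 0 < matPow μ a z x)
    (hb : 0 < matPow μ b y w) : lsRoot μ x y ≤ lsRoot μ z w := by
  refine le_of_forall_lt_imp_le_of_dense fun t' ht' => ?_
  obtain ⟨t, ht't, ht⟩ := exists_between ht'
  have hc : matPow μ a z x * matPow μ b y w ≠ 0 := mul_ne_zero ha.ne' hb.ne'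
  have hfreq : ∃ᶠ n in atTop, t < matPow μ n x y ^ (n : ℝ)⁻¹ :=
    frequently_lt_of_lt_limsup (by isBoundedDefault) ht
  refine le_limsup_of_frequently_le' (frequently_atTop.2 fun N => ?_)
  obtain ⟨n, hroot, hlow, hnN, hn1⟩ := (hfreq.and_eventually
    ((eventually_le_rpow_inv_mul_pow hc ht.ne_top ht't (a + b)).and
      ((eventually_ge_atTop N).and (eventually_ge_atTop 1)))).exists
  have hpow : t ^ n ≤ matPow μ n x y := by
    have := ((ENNReal.lt_rpow_inv_iff (by positivity)).1 hroot).le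
    rwa [ENNReal.rpow_natCast] at this
  refine ⟨n + (a + b), by omega, hlow.trans (ENNReal.rpow_le_rpow ?_ (by positivity))⟩
  calc matPow μ a z x * matPow μ b y w * t ^ n
      ≤ matPow μ a z x * (matPow μ n x y * matPow μ b y w) := by
        rw [mul_right_comm, mul_assoc]; gcongr
    _ ≤ matPow μ a z x * matPow μ (n + b) x w := by gcongr; exact mul_le_matPow_add n b x y w
    _ ≤ matPow μ (a + (n + b)) z w := mul_le_matPow_add a (n + b) z x w
    _ = matPow μ (n + (a + b)) z w := by rw [show a + (n + b) = n + (a + b) by omega]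

lemma lsRoot_eq_of_connectedW (hconn : connectedW μ) (x y z w : X) :
    lsRoot μ x y = lsRoot μ z w := by
  obtain ⟨_, -, hzx⟩ := hconn z x
  obtain ⟨_, -, hyw⟩ := hconn y w
  obtain ⟨_, -, hxz⟩ := hconn x z
  obtain ⟨_, -, hwy⟩ := hconn w y
  exact (lsRoot_le_lsRoot_of_pos hzx hyw).antisymm (lsRoot_le_lsRoot_of_pos hxz hwy)

def reachWithin (μ : X → X → ℝ≥0∞) (m : ℕ) (x : X) : Set X :=
  {z | ∃ k < m, 0 < matPow μ k x z}

lemma finite_setOf_matPow_pos (hfin : ∀ x, {y | 0 < μ x y}.Finite) (n : ℕ) (x : X) :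
    {y | 0 < matPow μ n x y}.Finite := by
  induction n with
  | zero =>
    refine (Set.finite_singleton x).subset fun y hy => ?_
    by_contra hxy
    simp [matPow, Ne.symm hxy] at hy
  | succ n ih =>
    refine (ih.biUnion fun z _ => hfin z).subset fun y hy => ?_
    obtain ⟨z, hz⟩ : ∃ z, matPow μ n x z * μ z y ≠ 0 := by
      by_contra! h
      exact hy.ne' (ENNReal.tsum_eq_zero.2 h)
    obtain ⟨hxz, hzy⟩ := mul_ne_zero_iff.1 hz
    exact Set.mem_biUnion (pos_iff_ne_zero.2 hxz) (pos_iff_ne_zero.2 hzy)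

lemma reachWithin_finite (hfin : ∀ x, {y | 0 < μ x y}.Finite) (m : ℕ) (x : X) :
    (reachWithin μ m x).Finite :=
  ((Set.finite_Iio m).biUnion fun k _ => finite_setOf_matPow_pos hfin k x).subset
    fun _ ⟨_, hk, hz⟩ => Set.mem_biUnion hk hz

lemma matPow_eq_of_eqOn_reachWithin {m : ℕ} {x : X}
    (h : ∀ z ∈ reachWithin μ m x, ∀ w, ν z w = μ z w) (y : X) :
    matPow ν m x y = matPow μ m x y := by
  induction m generalizing y with
  | zero => rfl
  | succ n ih =>
    have ih' := ih fun z ⟨k, hk, hz⟩ => h z ⟨k, by omega, hz⟩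
    refine tsum_congr fun z => ?_
    rcases eq_zero_or_pos (matPow μ n x z) with h0 | h0
    · rw [ih', h0, zero_mul, zero_mul]
    · rw [ih', h z ⟨n, by omega, h0⟩]

/-- The only edges on which `matPow (percW μ c) m x` depends. -/
def outEdgesWithin (μ : X → X → ℝ≥0∞) (m : ℕ) (x : X) : Set {e : Sym2 X // IsEdgeW μ e} :=
  {e | ∃ z ∈ reachWithin μ m x, ∃ w, 0 < μ z w ∧ e.1 = s(z, w)}

lemma outEdgesWithin_finite (hfin : ∀ x, {y | 0 < μ x y}.Finite) (m : ℕ) (x : X) :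
    (outEdgesWithin μ m x).Finite := by
  have hsym : (⋃ z ∈ reachWithin μ m x, (fun w => s(z, w)) '' {w | 0 < μ z w}).Finite :=
    (reachWithin_finite hfin m x).biUnion fun z _ => (hfin z).image _
  refine (hsym.preimage_embedding (.subtype (IsEdgeW μ))).subset ?_
  rintro e ⟨z, hz, w, hzw, he⟩
  exact Set.mem_biUnion hz ⟨w, hzw, he.symm⟩

lemma matPow_percW_eq_of_open {m : ℕ} {x : X} {c : {e : Sym2 X // IsEdgeW μ e} → Bool}
    (hc : ∀ e ∈ outEdgesWithin μ m x, c e = true) (y : X) :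
    matPow (percW μ c) m x y = matPow μ m x y := by
  refine matPow_eq_of_eqOn_reachWithin (fun z hz w => ?_) y
  rcases eq_zero_or_pos (μ z w) with hzw | hzw
  · exact le_antisymm (hzw ▸ percW_le c z w) (hzw ▸ zero_le)
  · have hedge : IsEdgeW μ s(z, w) := ⟨z, w, rfl, hzw⟩
    simp [percW, hedge, hc ⟨_, hedge⟩ ⟨z, hz, w, hzw, rfl⟩]

lemma lsRoot_percW_le (c : {e : Sym2 X // IsEdgeW μ e} → Bool) (x y : X) :
    lsRoot (percW μ c) x y ≤ lsRoot μ x y :=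
  limsup_le_limsup (Eventually.of_forall fun n =>
    ENNReal.rpow_le_rpow (matPow_mono (percW_le c) n x y) (by positivity))

lemma exists_forall_open_lt_lsRoot_percW {t : ℝ≥0∞} {x : X} (ht : t < lsRoot μ x x) :
    ∃ m, ∀ c : {e : Sym2 X // IsEdgeW μ e} → Bool,
      (∀ e ∈ outEdgesWithin μ m x, c e = true) → t < lsRoot (percW μ c) x x := by
  obtain ⟨m, hmt, hm⟩ := ((frequently_lt_of_lt_limsup (by isBoundedDefault) ht).and_eventually
    (eventually_ne_atTop 0)).exists
  refine ⟨m, fun c hc => hmt.trans_le ?_⟩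
  rw [← matPow_percW_eq_of_open hc]
  exact rpow_inv_le_lsRoot x hm

end WeightedGraph

lemma ae_eventually_forall_mem_eq_true {Ω E : Type*} [MeasurableSpace Ω] {P : Measure Ω}
    [IsProbabilityMeasure P] {T : Set E} (hT : T.Finite) {Y : ℕ → Ω → E → Bool}
    (hmeas : ∀ n e, Measurable fun a => Y n a e) {p : ℕ → ℝ≥0∞}
    (hber : ∀ n e, P {a | Y n a e = true} = p n) (hsum : ∑' n, (1 - p n) ≠ ⊤) :
    ∀ᵐ a ∂P, ∀ᶠ n in atTop, ∀ e ∈ T, Y n a e = true := by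
  have hprob_false : ∀ n e, P {a | Y n a e = false} = 1 - p n := fun n e => by
    have hms : MeasurableSet {a | Y n a e = true} := hmeas n e (measurableSet_singleton true)
    rw [← hber n e, ← prob_compl_eq_one_sub hms]
    congr 1
    ext a
    simp
  have hbad : ∑' n, P (⋃ e ∈ hT.toFinset, {a | Y n a e = false}) ≠ ⊤ := by
    refine ne_top_of_le_ne_top
      (ENNReal.mul_ne_top (ENNReal.natCast_ne_top hT.toFinset.card) hsum) ?_
    rw [← ENNReal.tsum_mul_left]
    refine ENNReal.tsum_le_tsum fun n => (measure_biUnion_finset_le _ _).trans_eq ?_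
    simp [hprob_false]
  filter_upwards [ae_eventually_notMem hbad] with a ha
  filter_upwards [ha] with n hn e he
  by_contra hfalse
  exact hn (Set.mem_biUnion (hT.mem_toFinset.2 he) (by simpa using hfalse))

open WeightedGraph in
theorem percolation_strong_critical_parameter_tendsto_general
    {X : Type*} [Countable X] [DecidableEq X]
    (μ : X → X → ℝ≥0∞) (hconn : connectedW μ)
    (hbg : bddGeometryW μ)
    (p : ℕ → ℝ≥0∞) (hsum : ∑' n, (1 - p n) ≠ ⊤)
    {Ω : Type*} [MeasureSpace Ω] [IsProbabilityMeasure (ℙ : Measure Ω)]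
    (Y : ℕ → Ω → {e : Sym2 X // IsEdgeW μ e} → Bool)
    (hmeas : ∀ n e, Measurable fun a => Y n a e)
    (hber : ∀ n e, ℙ {a | Y n a e = true} = p n) :
    ∀ᵐ a ∂ℙ, ∀ x y : X,
      Tendsto (fun n => ⨅ z : X, convR (percW μ (Y n a)) z z) atTop
        (nhds (convR μ x y)) := by
  obtain ⟨_, hD⟩ := hbg
  have hfin : ∀ x, {y | 0 < μ x y}.Finite := fun x => (hD x).1
  have hopen : ∀ᵐ a ∂ℙ, ∀ x m, ∀ᶠ n in atTop, ∀ e ∈ outEdgesWithin μ m x, Y n a e = true := by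
    simp only [ae_all_iff]
    exact fun x m =>
      ae_eventually_forall_mem_eq_true (outEdgesWithin_finite hfin m x) hmeas hber hsum
  filter_upwards [hopen] with a ha x y
  simp only [convR, ← ENNReal.inv_iSup]
  refine Tendsto.inv (tendsto_order.2 ⟨fun t ht => ?_, fun t ht => ?_⟩)
  · rw [lsRoot_eq_of_connectedW hconn x y x x] at ht
    obtain ⟨m, hm⟩ := exists_forall_open_lt_lsRoot_percW ht
    filter_upwards [ha x m] with n hn
    exact (hm _ hn).trans_le (le_iSup (fun z => lsRoot (percW μ (Y n a)) z z) x)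
  · refine Eventually.of_forall fun n => (iSup_le fun z => ?_).trans_lt ht
    exact (lsRoot_percW_le _ z z).trans (lsRoot_eq_of_connectedW hconn z z x y).le

/-- Theorem 7.1 (1): if `∑ (1 - pₙ) < ∞`, then the strong critical
parameters `λ_s(Y^a_n) = inf_x r_{ωₙ}(x)` of the Bernoulli(`pₙ`)-percolated graphs
converge almost surely to `R_μ = λ_s(X, μ)`. -/
theorem percolation_strong_critical_parameter_tendsto
    {X : Type*} [Countable X] [DecidableEq X]
    (μ : X → X → ℝ≥0∞) (hbdd : bddRows μ) (hconn : connectedW μ)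
    (hno : nonOrientedW μ) (hbg : bddGeometryW μ)
    (p : ℕ → ℝ≥0∞) (hp : ∀ n, p n ≤ 1) (hsum : ∑' n, (1 - p n) ≠ ⊤)
    {Ω : Type*} [MeasureSpace Ω] [IsProbabilityMeasure (ℙ : Measure Ω)]
    (Y : ℕ → Ω → {e : Sym2 X // IsEdgeW μ e} → Bool)
    (hmeas : ∀ n e, Measurable fun a => Y n a e)
    (hindep : iIndepFun
      (fun (ne : ℕ × {e : Sym2 X // IsEdgeW μ e}) a => Y ne.1 a ne.2) ℙ)
    (hber : ∀ n e, ℙ {a | Y n a e = true} = p n) :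
    ∀ᵐ a ∂ℙ, ∀ x y : X,
      Tendsto (fun n => ⨅ z : X, convR (percW μ (Y n a)) z z) atTop
        (nhds (convR μ x y)) :=
  percolation_strong_critical_parameter_tendsto_general μ hconn hbg p hsum Y hmeas hber
end
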